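/- arXiv:1810.09011 — 11 statements merged into one kernel-verified Lean document; each statement's English description precedes it below -/
import Mathlib

section
/- For an even positive integer k, there do not exist three coprime integer pairs v₁, v₂, v₃ (each vᵢ = (pᵢ, qᵢ) with gcd(pᵢ,qᵢ)=1) that are pairwise distinct up to sign and such that |pᵢ·qⱼ - qᵢ·pⱼ| = k for all i ≠ j. -/
lemma copAux (p q : ℤ) (h : IsCoprime p q) : ¬((p : ZMod 2) = 0 ∧ (q : ZMod 2) = 0) := by
  rintro ⟨hp, hq⟩
  rw [ZMod.intCast_zmod_eq_zero_iff_dvd] at hp hq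
  have := h.isUnit_of_dvd' hp hq
  rw [Int.isUnit_iff] at this
  omega

lemma zmod2Aux : ∀ a b c d : ZMod 2, a * d - b * c = 0 → ¬(a = 0 ∧ b = 0) →
    ¬(c = 0 ∧ d = 0) → a + c = 0 ∧ b + d = 0 := by decide

theorem stmt_2 (k : ℤ) (hk : 0 < k) (hke : Even k) :
    ¬ ∃ p₁ q₁ p₂ q₂ p₃ q₃ : ℤ,
      IsCoprime p₁ q₁ ∧ IsCoprime p₂ q₂ ∧ IsCoprime p₃ q₃ ∧
      ((p₁, q₁) ≠ (p₂, q₂) ∧ (p₁, q₁) ≠ (-p₂, -q₂)) ∧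
      ((p₁, q₁) ≠ (p₃, q₃) ∧ (p₁, q₁) ≠ (-p₃, -q₃)) ∧
      ((p₂, q₂) ≠ (p₃, q₃) ∧ (p₂, q₂) ≠ (-p₃, -q₃)) ∧
      |p₁ * q₂ - q₁ * p₂| = k ∧
      |p₁ * q₃ - q₁ * p₃| = k ∧
      |p₂ * q₃ - q₂ * p₃| = k := by
  rintro ⟨p₁, q₁, p₂, q₂, p₃, q₃, h1, h2, h3, -, -, -, hd12, hd13, hd23⟩
  have hk0 : k ≠ 0 := hk.ne'
  obtain ⟨m, hm⟩ := hke
  obtain ⟨e, he, hde⟩ : ∃ e : ℤ, (e = 1 ∨ e = -1) ∧ p₁ * q₂ - q₁ * p₂ = e * k := by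
    rcases (abs_eq hk.le).mp hd12 with h | h
    exacts [⟨1, Or.inl rfl, by linarith⟩, ⟨-1, Or.inr rfl, by linarith⟩]
  obtain ⟨e', he', hde'⟩ : ∃ e : ℤ, (e = 1 ∨ e = -1) ∧ p₁ * q₃ - q₁ * p₃ = e * k := by
    rcases (abs_eq hk.le).mp hd13 with h | h
    exacts [⟨1, Or.inl rfl, by linarith⟩, ⟨-1, Or.inr rfl, by linarith⟩]
  obtain ⟨e'', he'', hde''⟩ : ∃ e : ℤ, (e = 1 ∨ e = -1) ∧ p₂ * q₃ - q₂ * p₃ = e * k := by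
    rcases (abs_eq hk.le).mp hd23 with h | h
    exacts [⟨1, Or.inl rfl, by linarith⟩, ⟨-1, Or.inr rfl, by linarith⟩]
  have keyp : e * p₃ = e' * p₂ - e'' * p₁ := by
    apply mul_left_cancel₀ hk0
    linear_combination (-p₃) * hde + p₂ * hde' - p₁ * hde''
  have keyq : e * q₃ = e' * q₂ - e'' * q₁ := by
    apply mul_left_cancel₀ hk0
    linear_combination (-q₃) * hde + q₂ * hde' - q₁ * hde''
  have he2 : (e : ZMod 2) = 1 := by rcases he with rfl | rfl <;> decide
  have he'2 : (e' : ZMod 2) = 1 := by rcases he' with rfl | rfl <;> decide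
  have he''2 : (e'' : ZMod 2) = 1 := by rcases he'' with rfl | rfl <;> decide
  have hdet : (p₁ : ZMod 2) * q₂ - (q₁ : ZMod 2) * p₂ = 0 := by
    have := congrArg (fun z : ℤ => (z : ZMod 2)) hde
    push_cast at this
    rw [this, he2, hm]
    push_cast
    ring_nf
    simp [CharTwo.two_eq_zero]
  obtain ⟨ha, hb⟩ := zmod2Aux (p₁ : ZMod 2) q₁ p₂ q₂ hdet (copAux _ _ h1) (copAux _ _ h2)
  apply copAux _ _ h3
  constructor
  · have := congrArg (fun z : ℤ => (z : ZMod 2)) keyp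
    push_cast at this
    rw [he2, he'2, he''2, one_mul, one_mul, one_mul] at this
    rw [this, CharTwo.sub_eq_add, add_comm]
    exact ha
  · have := congrArg (fun z : ℤ => (z : ZMod 2)) keyq
    push_cast at this
    rw [he2, he'2, he''2, one_mul, one_mul, one_mul] at this
    rw [this, CharTwo.sub_eq_add, add_comm]
    exact hb
end

section
/- Let r ≥ 1. Call (a,b) ∈ (ℤ/rℤ)² admissible if the only λ ∈ ℤ/rℤ with λ·(a,b) = (0,0) is λ = 0. Then for every admissible (x,y) there exists a coprime pair of integers (x',y') and a unit λ ∈ (ℤ/rℤ)* with (x,y) = λ·(x' mod r, y' mod r). -/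
theorem stmt_4 (r : ℕ) (hr : 1 ≤ r) (a b : ZMod r)
    (hadm : ∀ lam : ZMod r, lam * a = 0 ∧ lam * b = 0 → lam = 0) :
    ∃ (x' y' : ℤ) (lam : (ZMod r)ˣ), IsCoprime x' y' ∧
      a = (lam : ZMod r) * (x' : ZMod r) ∧ b = (lam : ZMod r) * (y' : ZMod r) := by
  haveI : NeZero r := ⟨by omega⟩
  set d : ℕ := Nat.gcd a.val b.val with hd
  -- Step 1: gcd(d, r) = 1
  have hg : Nat.gcd d r = 1 := by
    by_contra hne
    set g : ℕ := Nat.gcd d r with hgdef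
    have hgr : g ∣ r := Nat.gcd_dvd_right d r
    have hg0 : g ≠ 0 := by
      intro h0
      have := Nat.eq_zero_of_gcd_eq_zero_right h0
      omega
    have hg2 : 2 ≤ g := by omega
    have hga : g ∣ a.val := dvd_trans (Nat.gcd_dvd_left d r) (Nat.gcd_dvd_left _ _)
    have hgb : g ∣ b.val := dvd_trans (Nat.gcd_dvd_left d r) (Nat.gcd_dvd_right _ _)
    have hlam : (((r / g : ℕ) : ZMod r)) = 0 := by
      apply hadm
      constructor
      · have : ((r / g : ℕ) : ZMod r) * a = ((r / g * a.val : ℕ) : ZMod r) := by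
          push_cast
          rw [ZMod.natCast_val, ZMod.cast_id]
        rw [this, ZMod.natCast_eq_zero_iff]
        obtain ⟨k, hk⟩ := hga
        refine ⟨k, ?_⟩
        rw [hk, ← mul_assoc, Nat.div_mul_cancel hgr]
      · have : ((r / g : ℕ) : ZMod r) * b = ((r / g * b.val : ℕ) : ZMod r) := by
          push_cast
          rw [ZMod.natCast_val, ZMod.cast_id]
        rw [this, ZMod.natCast_eq_zero_iff]
        obtain ⟨k, hk⟩ := hgb
        refine ⟨k, ?_⟩
        rw [hk, ← mul_assoc, Nat.div_mul_cancel hgr]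
    rw [ZMod.natCast_eq_zero_iff] at hlam
    have h1 : 1 ≤ r / g := Nat.one_le_div_iff (by omega) |>.mpr (Nat.le_of_dvd (by omega) hgr)
    have h2 : r / g < r := Nat.div_lt_self (by omega) (by omega)
    have := Nat.le_of_dvd (by omega) hlam
    omega
  -- Step 2: case split on d = 0
  by_cases hd0 : d = 0
  · -- a.val = b.val = 0, so gcd(0, r) = r = 1
    have hr1 : r = 1 := by
      have := hg
      rw [hd0] at this
      simpa using this
    subst hr1
    exact ⟨1, 0, 1, isCoprime_one_left, Subsingleton.elim _ _, Subsingleton.elim _ _⟩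
  · have hdpos : 0 < d := Nat.pos_of_ne_zero hd0
    have hcop : Nat.Coprime (a.val / d) (b.val / d) := Nat.coprime_div_gcd_div_gcd hdpos
    refine ⟨(a.val / d : ℕ), (b.val / d : ℕ), ZMod.unitOfCoprime d hg, ?_, ?_, ?_⟩
    · exact Nat.isCoprime_iff_coprime.mpr hcop
    · have h1 : d * (a.val / d) = a.val := Nat.mul_div_cancel' (Nat.gcd_dvd_left _ _)
      have key : ((d : ZMod r)) * ((a.val / d : ℕ) : ZMod r) = a := by
        rw [← Nat.cast_mul, h1, ZMod.natCast_val, ZMod.cast_id]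
      rw [ZMod.coe_unitOfCoprime]
      exact_mod_cast key.symm
    · have h1 : d * (b.val / d) = b.val := Nat.mul_div_cancel' (Nat.gcd_dvd_right _ _)
      have key : ((d : ZMod r)) * ((b.val / d : ℕ) : ZMod r) = b := by
        rw [← Nat.cast_mul, h1, ZMod.natCast_val, ZMod.cast_id]
      rw [ZMod.coe_unitOfCoprime]
      exact_mod_cast key.symm
end

section
/- Let k ≥ 1 and suppose (a,b) and (p,q) are coprime integer pairs with |a·q - b·p| = k. Then the images of (a,b) and (p,q) in (ℤ/kℤ)² are equivalent under multiplication by a unit of ℤ/kℤ; i.e., there is λ ∈ (ℤ/kℤ)* with (p,q) ≡ λ·(a,b) mod k. -/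
theorem stmt_7 (k : ℕ) (hk : 1 ≤ k) (a b p q : ℤ)
    (hab : IsCoprime a b) (hpq : IsCoprime p q)
    (h : |a * q - b * p| = k) :
    ∃ lam : (ZMod k)ˣ, (p : ZMod k) = (lam : ZMod k) * (a : ZMod k) ∧
      (q : ZMod k) = (lam : ZMod k) * (b : ZMod k) := by
  obtain ⟨u, v, huv⟩ := hab
  obtain ⟨s, t, hst⟩ := hpq
  have key : (a : ZMod k) * q = (b : ZMod k) * p := by
    have h0 : ((a * q - b * p : ℤ) : ZMod k) = 0 := by
      rcases (abs_eq (by positivity : (0:ℤ) ≤ (k:ℤ))).mp h with h1 | h1 <;>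
        rw [h1] <;> push_cast <;> simp
    push_cast at h0
    linear_combination h0
  have huv' : (u : ZMod k) * a + (v : ZMod k) * b = 1 := by
    have := congrArg (Int.cast : ℤ → ZMod k) huv
    push_cast at this
    exact this
  have hst' : (s : ZMod k) * p + (t : ZMod k) * q = 1 := by
    have := congrArg (Int.cast : ℤ → ZMod k) hst
    push_cast at this
    exact this
  set L : ZMod k := u * p + v * q with hL
  set M : ZMod k := s * a + t * b with hM
  have hLM : L * M = 1 := by
    rw [hL, hM]
    linear_combination (↑v * ↑s - ↑u * ↑t) * key + (↑s * ↑p + ↑t * ↑q) * huv' + hst'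
  refine ⟨Units.mkOfMulEqOne L M hLM, ?_, ?_⟩
  · show (p : ZMod k) = L * a
    rw [hL]
    linear_combination -(↑p) * huv' - ↑v * key
  · show (q : ZMod k) = L * b
    rw [hL]
    linear_combination -(↑q) * huv' + ↑u * key
end

section
/- Let r > k ≥ 1 be integers. If (a,b) and (p,q) are coprime integer pairs, distinct up to sign, whose reductions mod r are equivalent under multiplication by a unit of ℤ/rℤ, then |a·q - b·p| > k. In particular, the reduction map gives a proper vertex coloring of the graph F_{≤k} whose edges are pairs with 1 ≤ |a·q - b·p| ≤ k. -/
theorem stmt_8 (r k : ℕ) (hk : 1 ≤ k) (hrk : k < r)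
    (a b p q : ℤ) (hab : IsCoprime a b) (hpq : IsCoprime p q)
    (hne : (a, b) ≠ (p, q) ∧ (a, b) ≠ (-p, -q))
    (heq : ∃ lam : (ZMod r)ˣ, (p : ZMod r) = (lam : ZMod r) * (a : ZMod r) ∧
      (q : ZMod r) = (lam : ZMod r) * (b : ZMod r)) :
    |a * q - b * p| > (k : ℤ) := by
  obtain ⟨lam, hp, hq⟩ := heq
  have hdvd : (r : ℤ) ∣ a * q - b * p := by
    have h0 : ((a * q - b * p : ℤ) : ZMod r) = 0 := by
      push_cast
      rw [hp, hq]; ring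
    exact_mod_cast (ZMod.intCast_zmod_eq_zero_iff_dvd _ r).mp h0
  have hne0 : a * q - b * p ≠ 0 := by
    intro h0
    have h0' : a * q = b * p := by linarith
    have hap : a ∣ p := hab.dvd_of_dvd_mul_left ⟨q, h0'.symm⟩
    have hpa : p ∣ a := hpq.dvd_of_dvd_mul_left ⟨b, by linear_combination h0'⟩
    by_cases hp0 : p = 0
    · subst hp0
      have ha0 : a = 0 := zero_dvd_iff.mp hpa
      subst ha0
      have hb := Int.isUnit_iff.mp (isCoprime_zero_left.mp hab)
      have hq1 := Int.isUnit_iff.mp (isCoprime_zero_left.mp hpq)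
      rcases hb with hb | hb <;> rcases hq1 with hq1 | hq1
      · exact hne.1 (by rw [hb, hq1])
      · exact hne.2 (by rw [hb, hq1]; norm_num)
      · exact hne.2 (by rw [hb, hq1]; norm_num)
      · exact hne.1 (by rw [hb, hq1])
    · rcases Int.associated_iff.mp (associated_of_dvd_dvd hap hpa) with h | h
      · have hbq : q = b := mul_left_cancel₀ hp0
          (by rw [show p * q = a * q by rw [h]]; linear_combination h0')
        exact hne.1 (by rw [h, hbq])
      · have hbq : -q = b := mul_left_cancel₀ hp0
          (by rw [show p * -q = a * q by rw [h]; ring]; linear_combination h0')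
        exact hne.2 (by rw [h, ← hbq])
  have hle : (r : ℤ) ≤ |a * q - b * p| :=
    Int.le_of_dvd (abs_pos.mpr hne0) ((dvd_abs _ _).mpr hdvd)
  have : (k : ℤ) < (r : ℤ) := by exact_mod_cast hrk
  linarith
end

section
/- Let p be a prime with p > k. The chromatic number of the graph F_{≤k} is at most 1 + p. -/
/-- Coprime integer pairs: the vertices of the Farey graph before
identifying `(p,q)` with `(-p,-q)`. -/
def CoprimePair : Type := {v : ℤ × ℤ // IsCoprime v.1 v.2}

/-- The equivalence identifying a coprime pair with its negative. -/
def fareySetoid : Setoid CoprimePair where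
  r v w := v.1 = w.1 ∨ v.1 = -w.1
  iseqv := by
    constructor
    · intro v; exact Or.inl rfl
    · rintro v w (h | h)
      · exact Or.inl h.symm
      · right; simp [h]
    · rintro u v w (h1 | h1) (h2 | h2)
      · exact Or.inl (h1.trans h2)
      · right; rw [h1, h2]
      · right; rw [h1, h2]
      · left; rw [h1, h2, neg_neg]

/-- Vertices of the Farey graph: coprime pairs up to sign. -/
def FareyVertex : Type := Quotient fareySetoid

/-- The graph `F_{≤ k}`: edges between distinct vertices admitting
representatives with determinant pairing of absolute value between 1 and `k`. -/
def FareyLE (k : ℕ) : SimpleGraph FareyVertex where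
  Adj x y := x ≠ y ∧ ∃ a b : CoprimePair, x = Quotient.mk fareySetoid a ∧
      y = Quotient.mk fareySetoid b ∧
      1 ≤ |a.1.1 * b.1.2 - a.1.2 * b.1.1| ∧
      |a.1.1 * b.1.2 - a.1.2 * b.1.1| ≤ (k : ℤ)
  symm := by
    constructor
    rintro x y ⟨hne, a, b, hx, hy, h1, h2⟩
    refine ⟨hne.symm, b, a, hy, hx, ?_, ?_⟩
    · rwa [show b.1.1 * a.1.2 - b.1.2 * a.1.1 =
        -(a.1.1 * b.1.2 - a.1.2 * b.1.1) by ring, abs_neg]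
    · rwa [show b.1.1 * a.1.2 - b.1.2 * a.1.1 =
        -(a.1.1 * b.1.2 - a.1.2 * b.1.1) by ring, abs_neg]
  loopless := by constructor; rintro x ⟨hne, _⟩; exact hne rfl

/-!
Color a vertex `±(a, b)` by the point `[a : b]` of the projective line over `ZMod p`. Two pairs
with the same image have determinant divisible by `p`, and for adjacent vertices of `F_{≤k}` the
determinant is nonzero of absolute value at most `k < p`, so adjacent vertices get different colors.
-/

/-- The point `[x : y]` of the projective line over `F`, as an affine slope or `none` at infinity. -/
def projSlope {F : Type*} [Field F] [DecidableEq F] (v : F × F) : Option F :=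
  if v.2 = 0 then none else some (v.1 / v.2)

section projSlope

variable {F : Type*} [Field F] [DecidableEq F]

theorem projSlope_neg (v : F × F) : projSlope (-v) = projSlope v := by
  simp only [projSlope, Prod.snd_neg, Prod.fst_neg, neg_eq_zero, neg_div_neg_eq]

theorem projSlope_ne_of_det_ne_zero {v w : F × F} (h : v.1 * w.2 - v.2 * w.1 ≠ 0) :
    projSlope v ≠ projSlope w := by
  unfold projSlope
  by_cases hv : v.2 = 0 <;> by_cases hw : w.2 = 0
  · exact absurd (by rw [hv, hw]; ring) h
  · simp [hv, hw]
  · simp [hv, hw]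
  rw [if_neg hv, if_neg hw, ne_eq, Option.some.injEq, div_eq_div_iff hv hw]
  exact fun heq => h (by linear_combination heq)

end projSlope

def CoprimePair.toZMod (p : ℕ) (v : CoprimePair) : ZMod p × ZMod p :=
  ((v.1.1 : ZMod p), (v.1.2 : ZMod p))

def fareyColor (p : ℕ) [Fact p.Prime] : FareyVertex → Option (ZMod p) :=
  Quotient.lift (fun v => projSlope (v.toZMod p)) <| by
    rintro v w (h | h)
    · simp only [CoprimePair.toZMod, h]
    · have hneg : v.toZMod p = -w.toZMod p := by
        simp only [CoprimePair.toZMod, h, Prod.fst_neg, Prod.snd_neg, Int.cast_neg, Prod.neg_mk]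
      simp only [hneg, projSlope_neg]

theorem fareyColor_ne_of_adj {k p : ℕ} [Fact p.Prime] (hpk : k < p) {x y : FareyVertex}
    (hxy : (FareyLE k).Adj x y) : fareyColor p x ≠ fareyColor p y := by
  obtain ⟨-, a, b, rfl, rfl, hdet_pos, hdet_le⟩ := hxy
  refine projSlope_ne_of_det_ne_zero (v := a.toZMod p) (w := b.toZMod p) ?_
  have hdet : ((a.1.1 * b.1.2 - a.1.2 * b.1.1 : ℤ) : ZMod p) ≠ 0 := fun hzero =>
    abs_pos.mp (by omega) <| Int.eq_zero_of_abs_lt_dvd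
      ((ZMod.intCast_zmod_eq_zero_iff_dvd _ p).mp hzero) (by omega)
  simpa only [CoprimePair.toZMod, Int.cast_sub, Int.cast_mul] using hdet

def fareyColoring {k p : ℕ} [Fact p.Prime] (hpk : k < p) :
    (FareyLE k).Coloring (Option (ZMod p)) :=
  SimpleGraph.Coloring.mk (fareyColor p) (fareyColor_ne_of_adj hpk)

theorem stmt_9 (k p : ℕ) (hp : p.Prime) (hpk : k < p) :
    (FareyLE k).chromaticNumber ≤ 1 + p := by
  have : Fact p.Prime := ⟨hp⟩
  have hcard : Fintype.card (Option (ZMod p)) = 1 + p := by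
    rw [Fintype.card_option, ZMod.card, add_comm]
  simpa only [hcard, Nat.cast_add, Nat.cast_one] using
    (fareyColoring hpk).colorable.chromaticNumber_le
end

section
/- Let k ≥ 1. Suppose (a,b) and (x,y) are coprime integer pairs with b, y > 0, |a| + b > k, and |a·y - b·x| = k. Then either (|x| ≤ |a| and y ≤ b) or (|a| ≤ |x| and b ≤ y). -/
theorem stmt_10 (k a b x y : ℤ) (hk : 1 ≤ k)
    (hab : IsCoprime a b) (hxy : IsCoprime x y)
    (hb : 0 < b) (hy : 0 < y) (hlevel : |a| + b > k)
    (h : |a * y - b * x| = k) :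
    (|x| ≤ |a| ∧ y ≤ b) ∨ (|a| ≤ |x| ∧ b ≤ y) := by
  by_contra hcon
  push_neg at hcon
  obtain ⟨h1, h2⟩ := hcon
  have hx0 : x ≠ 0 := by
    rintro rfl
    simp only [isCoprime_zero_left] at hxy
    have hy1 : y = 1 := by rcases Int.isUnit_iff.mp hxy with h' | h' <;> omega
    have := h1 (by simp [abs_nonneg])
    omega
  have ha0 : a ≠ 0 := by
    rintro rfl
    simp only [isCoprime_zero_left] at hab
    have hb1 : b = 1 := by rcases Int.isUnit_iff.mp hab with h' | h' <;> omega
    have := h2 (by simp [abs_nonneg])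
    omega
  have habs := (abs_eq (le_trans zero_le_one hk)).mp h
  have key : (b < y ∧ |x| < |a|) ∨ (y < b ∧ |a| < |x|) := by
    rcases le_total |x| |a| with hle | hle
    · exact Or.inl ⟨h1 hle, lt_of_not_ge fun hh => absurd (h2 hh) (by
        have := h1 hle; omega)⟩
    · exact Or.inr ⟨h2 hle, lt_of_not_ge fun hh => absurd (h1 hh) (by
        have := h2 hle; omega)⟩
  rcases abs_cases a with ⟨ea, sa⟩ | ⟨ea, sa⟩ <;>
    rcases abs_cases x with ⟨ex, sx⟩ | ⟨ex, sx⟩ <;>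
    rw [ea, ex] at key <;> rw [ea] at hlevel <;>
    rcases key with ⟨k1, k2⟩ | ⟨k1, k2⟩ <;>
    rcases habs with he | he <;>
    nlinarith [mul_pos hb hy, hx0.lt_or_gt, ha0.lt_or_gt]
end

section
/- Let k be an even positive integer and (p,q) a coprime pair with q > 0. Then there is at most one coprime pair (a,b), up to sign, with |a·q - b·p| = k, |a| ≤ |p|, and 0 ≤ b ≤ q (with (a,b) distinct from (p,q) up to sign). -/
private lemma not_both_even' (a b : ℤ) (h : IsCoprime a b) (ha : (2:ℤ) ∣ a)
    (hb : (2:ℤ) ∣ b) : False := by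
  rcases Int.isUnit_iff.mp (h.isUnit_of_dvd' ha hb) with h' | h' <;> omega

private lemma parity_key' (a b p q : ℤ) (hab : IsCoprime a b) (hpq : IsCoprime p q)
    (h : (2:ℤ) ∣ a * q - b * p) : (2:ℤ) ∣ a - p ∧ (2:ℤ) ∣ b - q := by
  have z : ∀ A B P Q : ZMod 2, ¬(A = 0 ∧ B = 0) → ¬(P = 0 ∧ Q = 0) →
      A * Q - B * P = 0 → A - P = 0 ∧ B - Q = 0 := by decide
  have cd : ∀ n : ℤ, (2:ℤ) ∣ n ↔ ((n : ZMod 2) = 0) := by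
    intro n
    constructor
    · intro hn
      exact (ZMod.intCast_zmod_eq_zero_iff_dvd n 2).mpr (by exact_mod_cast hn)
    · intro hn
      exact_mod_cast (ZMod.intCast_zmod_eq_zero_iff_dvd n 2).mp hn
  have hA : ((a : ZMod 2) * q - b * p = 0) := by
    have := (cd _).mp h; push_cast at this; linear_combination this
  have hab' : ¬(((a : ZMod 2)) = 0 ∧ ((b : ZMod 2)) = 0) := by
    rintro ⟨h1, h2⟩
    exact not_both_even' a b hab ((cd a).mpr h1) ((cd b).mpr h2)
  have hpq' : ¬(((p : ZMod 2)) = 0 ∧ ((q : ZMod 2)) = 0) := by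
    rintro ⟨h1, h2⟩
    exact not_both_even' p q hpq ((cd p).mpr h1) ((cd q).mpr h2)
  obtain ⟨e1, e2⟩ := z _ _ _ _ hab' hpq' hA
  constructor
  · rw [cd]; push_cast; linear_combination e1
  · rw [cd]; push_cast; linear_combination e2

private lemma aux_diff' (k p q a₁ b₁ a₂ b₂ : ℤ) (hk : 0 < k) (hke : Even k)
    (hpq : IsCoprime p q) (hq : 0 < q)
    (h₁ : IsCoprime a₁ b₁) (h₂ : IsCoprime a₂ b₂)
    (hb₁0 : 0 ≤ b₁) (hb₁q : b₁ ≤ q) (hb₂0 : 0 ≤ b₂) (hb₂q : b₂ ≤ q)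
    (hpar : (2:ℤ) ∣ a₁ * q - b₁ * p)
    (heq : a₁ * q - b₁ * p = a₂ * q - b₂ * p) : a₁ = a₂ ∧ b₁ = b₂ := by
  have hmul : (a₁ - a₂) * q = (b₁ - b₂) * p := by ring_nf; linarith
  have hdvd : q ∣ (b₁ - b₂) := by
    have h' : q ∣ (b₁ - b₂) * p := ⟨a₁ - a₂, by linarith [hmul]⟩
    exact hpq.symm.dvd_of_dvd_mul_right h'
  obtain ⟨c, hc⟩ := hdvd
  have hc1 : -1 ≤ c := by nlinarith [hc]
  have hc2 : c ≤ 1 := by nlinarith [hc]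
  interval_cases c
  · -- c = -1 : b₂ = q, b₁ = 0, a₂ - a₁ = p
    exfalso
    have hb₂' : b₂ = q := by omega
    have hb₁' : b₁ = 0 := by omega
    have ha : a₂ - a₁ = p := by
      have : (a₁ - a₂) * q = (-q) * p := by rw [hmul, hc]; try ring
      nlinarith [this]
    have hpar₂ : (2:ℤ) ∣ a₂ * q - b₂ * p := by
      rw [← heq]; exact hpar
    obtain ⟨e1, e2⟩ := parity_key' a₂ b₂ p q h₂ hpq hpar₂
    refine not_both_even' a₁ b₁ h₁ ?_ ?_
    · omega
    · omega
  · -- c = 0 : b₁ = b₂, a₁ = a₂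
    have hb : b₁ = b₂ := by omega
    refine ⟨?_, hb⟩
    have : (a₁ - a₂) * q = 0 := by rw [hmul, hc]; try ring
    rcases mul_eq_zero.mp this with h | h
    · omega
    · omega
  · -- c = 1 : b₁ = q, b₂ = 0, a₁ - a₂ = p
    exfalso
    have ha : a₁ - a₂ = p := by
      have : (a₁ - a₂) * q = q * p := by rw [hmul, hc]; try ring
      nlinarith [this]
    obtain ⟨e1, e2⟩ := parity_key' a₁ b₁ p q h₁ hpq hpar
    refine not_both_even' a₂ b₂ h₂ ?_ ?_
    · omega
    · omega

private lemma aux_sum' (k p q a₁ b₁ a₂ b₂ : ℤ) (hk : 0 < k) (hke : Even k)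
    (hpq : IsCoprime p q) (hq : 0 < q)
    (h₁ : IsCoprime a₁ b₁) (h₂ : IsCoprime a₂ b₂)
    (ha₁ : |a₁| ≤ |p|) (ha₂ : |a₂| ≤ |p|)
    (hb₁0 : 0 ≤ b₁) (hb₁q : b₁ ≤ q) (hb₂0 : 0 ≤ b₂) (hb₂q : b₂ ≤ q)
    (hne₁ : (a₁, b₁) ≠ (p, q))
    (hpar : (2:ℤ) ∣ a₁ * q - b₁ * p)
    (heq : a₁ * q - b₁ * p = -(a₂ * q - b₂ * p)) : a₁ = -a₂ ∧ b₁ = -b₂ := by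
  have hmul : (a₁ + a₂) * q = (b₁ + b₂) * p := by ring_nf; linarith
  have hdvd : q ∣ (b₁ + b₂) := by
    have h' : q ∣ (b₁ + b₂) * p := ⟨a₁ + a₂, by linarith [hmul]⟩
    exact hpq.symm.dvd_of_dvd_mul_right h'
  obtain ⟨c, hc⟩ := hdvd
  have hc1 : 0 ≤ c := by nlinarith [hc]
  have hc2 : c ≤ 2 := by nlinarith [hc]
  interval_cases c
  · -- c = 0 : b₁ = b₂ = 0, a₁ = -a₂
    have hb : b₁ = 0 ∧ b₂ = 0 := by omega
    have : (a₁ + a₂) * q = 0 := by rw [hmul, hc]; try ring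
    rcases mul_eq_zero.mp this with h | h
    · exact ⟨by omega, by omega⟩
    · omega
  · -- c = 1 : a₁ + a₂ = p, b₁ + b₂ = q, parity contradiction
    exfalso
    have ha : a₁ + a₂ = p := by
      have : (a₁ + a₂) * q = q * p := by rw [hmul, hc]; try ring
      nlinarith [this]
    obtain ⟨e1, e2⟩ := parity_key' a₁ b₁ p q h₁ hpq hpar
    refine not_both_even' a₂ b₂ h₂ ?_ ?_
    · omega
    · omega
  · -- c = 2 : b₁ = b₂ = q, a₁ = a₂ = p, contradicts hne₁
    exfalso
    have hb : b₁ = q ∧ b₂ = q := by omega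
    have ha : a₁ + a₂ = 2 * p := by
      have : (a₁ + a₂) * q = (q * 2) * p := by rw [hmul, hc]; try ring
      nlinarith [this]
    have hap : a₁ = p := by
      rw [abs_le] at ha₁ ha₂
      rcases abs_cases p with ⟨h', _⟩ | ⟨h', _⟩ <;> omega
    exact hne₁ (by rw [hap, hb.1])

theorem stmt_11 (k p q : ℤ) (hk : 0 < k) (hke : Even k)
    (hpq : IsCoprime p q) (hq : 0 < q)
    (a₁ b₁ a₂ b₂ : ℤ)
    (h₁ : IsCoprime a₁ b₁) (h₂ : IsCoprime a₂ b₂)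
    (hd₁ : |a₁ * q - b₁ * p| = k) (hd₂ : |a₂ * q - b₂ * p| = k)
    (ha₁ : |a₁| ≤ |p|) (ha₂ : |a₂| ≤ |p|)
    (hb₁ : 0 ≤ b₁ ∧ b₁ ≤ q) (hb₂ : 0 ≤ b₂ ∧ b₂ ≤ q)
    (hne₁ : (a₁, b₁) ≠ (p, q) ∧ (a₁, b₁) ≠ (-p, -q))
    (hne₂ : (a₂, b₂) ≠ (p, q) ∧ (a₂, b₂) ≠ (-p, -q)) :
    (a₁, b₁) = (a₂, b₂) ∨ (a₁, b₁) = (-a₂, -b₂) := by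
  obtain ⟨hb₁0, hb₁q⟩ := hb₁
  obtain ⟨hb₂0, hb₂q⟩ := hb₂
  have h2k : (2:ℤ) ∣ k := hke.two_dvd
  have hpar : (2:ℤ) ∣ a₁ * q - b₁ * p := by
    rcases (abs_eq hk.le).mp hd₁ with e | e <;> omega
  rcases (abs_eq hk.le).mp hd₁ with e₁ | e₁ <;>
    rcases (abs_eq hk.le).mp hd₂ with e₂ | e₂
  · obtain ⟨u, v⟩ := aux_diff' k p q a₁ b₁ a₂ b₂ hk hke hpq hq h₁ h₂
      hb₁0 hb₁q hb₂0 hb₂q hpar (by omega)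
    left; rw [u, v]
  · obtain ⟨u, v⟩ := aux_sum' k p q a₁ b₁ a₂ b₂ hk hke hpq hq h₁ h₂ ha₁ ha₂
      hb₁0 hb₁q hb₂0 hb₂q hne₁.1 hpar (by omega)
    right; rw [u, v]
  · obtain ⟨u, v⟩ := aux_sum' k p q a₁ b₁ a₂ b₂ hk hke hpq hq h₁ h₂ ha₁ ha₂
      hb₁0 hb₁q hb₂0 hb₂q hne₁.1 hpar (by omega)
    right; rw [u, v]
  · obtain ⟨u, v⟩ := aux_diff' k p q a₁ b₁ a₂ b₂ hk hke hpq hq h₁ h₂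
      hb₁0 hb₁q hb₂0 hb₂q hpar (by omega)
    left; rw [u, v]
end

section
/- Let k ≥ 1 and (p,q) a coprime pair with q > 0. If (a₁,b₁) and (a₂,b₂) are two distinct-up-to-sign predecessors of (p,q) in F_k (i.e., each is adjacent to (p,q) with |aᵢ| ≤ |p| and 0 ≤ bᵢ ≤ q), then |a₁·b₂ - b₁·a₂| = k, i.e., the two predecessors are themselves adjacent in F_k. -/
/-- Same-sign case: both determinants equal `s`. -/
lemma aux_same (k p q s a₁ b₁ a₂ b₂ : ℤ) (hk : 1 ≤ k)
    (hpq : IsCoprime p q) (hq : 0 < q) (hs : |s| = k)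
    (e1 : a₁ * q - b₁ * p = s) (e2 : a₂ * q - b₂ * p = s)
    (hb₁0 : 0 ≤ b₁) (hb₁q : b₁ ≤ q) (hb₂0 : 0 ≤ b₂) (hb₂q : b₂ ≤ q)
    (hne : ¬(a₁ = a₂ ∧ b₁ = b₂)) :
    |a₁ * b₂ - b₁ * a₂| = k := by
  set x := a₁ * b₂ - b₁ * a₂ with hxdef
  have hs0 : s ≠ 0 := by
    intro h; rw [h] at hs; simp at hs; omega
  have ea : s * (a₁ - a₂) = -(p * x) := by
    rw [hxdef]; linear_combination a₂ * e1 - a₁ * e2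
  have eb : s * (b₁ - b₂) = -(q * x) := by
    rw [hxdef]; linear_combination b₂ * e1 - b₁ * e2
  have hx0 : x ≠ 0 := by
    intro h
    rw [h] at ea eb
    simp at ea eb
    rcases ea with ea | ea; · exact hs0 ea
    rcases eb with eb | eb; · exact hs0 eb
    exact hne ⟨by linarith, by linarith⟩
  have hdvdp : s ∣ p * x := ⟨a₂ - a₁, by linarith [ea]⟩
  have hdvdq : s ∣ q * x := ⟨b₂ - b₁, by linarith [eb]⟩
  obtain ⟨u, v, huv⟩ := hpq
  have hdvdx : s ∣ x := by
    have : x = u * (p * x) + v * (q * x) := by linear_combination (-x) * huv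
    rw [this]; exact dvd_add (Dvd.dvd.mul_left hdvdp u) (Dvd.dvd.mul_left hdvdq v)
  have hkdvd : k ∣ |x| := by
    rw [← hs]; exact (abs_dvd _ _).mpr ((dvd_abs _ _).mpr hdvdx)
  have hle : |x| ≤ k := by
    have h1 : q * |x| = k * |b₁ - b₂| := by
      have : |s * (b₁ - b₂)| = |q * x| := by rw [eb, abs_neg]
      rw [abs_mul, abs_mul, hs, abs_of_pos hq] at this
      linarith
    have h2 : |b₁ - b₂| ≤ q := abs_le.mpr ⟨by linarith, by linarith⟩
    nlinarith [abs_nonneg x, abs_nonneg (b₁ - b₂)]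
  have hge : k ≤ |x| := Int.le_of_dvd (abs_pos.mpr hx0) hkdvd
  omega

/-- Opposite-sign case: determinants are `s` and `-s`. -/
lemma aux_opp (k p q s a₁ b₁ a₂ b₂ : ℤ) (hk : 1 ≤ k)
    (hpq : IsCoprime p q) (hq : 0 < q) (hs : |s| = k)
    (e1 : a₁ * q - b₁ * p = s) (e2 : a₂ * q - b₂ * p = -s)
    (ha₁ : |a₁| ≤ |p|) (ha₂ : |a₂| ≤ |p|)
    (hb₁0 : 0 ≤ b₁) (hb₁q : b₁ ≤ q) (hb₂0 : 0 ≤ b₂) (hb₂q : b₂ ≤ q)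
    (hne : ¬(a₁ = -a₂ ∧ b₁ = -b₂)) :
    |a₁ * b₂ - b₁ * a₂| = k := by
  set x := a₁ * b₂ - b₁ * a₂ with hxdef
  have hs0 : s ≠ 0 := by
    intro h; rw [h] at hs; simp at hs; omega
  have ea : s * (a₁ + a₂) = p * x := by
    rw [hxdef]; linear_combination a₁ * e2 - a₂ * e1
  have eb : s * (b₁ + b₂) = q * x := by
    rw [hxdef]; linear_combination b₁ * e2 - b₂ * e1
  have hx0 : x ≠ 0 := by
    intro h
    rw [h] at ea eb
    simp at ea eb
    rcases ea with ea | ea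
    · exact hs0 ea
    rcases eb with eb | eb
    · exact hs0 eb
    exact hne ⟨by linarith, by linarith⟩
  have hdvdp : s ∣ p * x := ⟨a₁ + a₂, by linarith [ea]⟩
  have hdvdq : s ∣ q * x := ⟨b₁ + b₂, by linarith [eb]⟩
  obtain ⟨u, v, huv⟩ := hpq
  have hdvdx : s ∣ x := by
    have : x = u * (p * x) + v * (q * x) := by linear_combination (-x) * huv
    rw [this]; exact dvd_add (Dvd.dvd.mul_left hdvdp u) (Dvd.dvd.mul_left hdvdq v)
  have hkdvd : k ∣ |x| := by
    rw [← hs]; exact (abs_dvd _ _).mpr ((dvd_abs _ _).mpr hdvdx)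
  have h1 : q * |x| = k * (b₁ + b₂) := by
    have h : |s * (b₁ + b₂)| = |q * x| := by rw [eb]
    rw [abs_mul, abs_mul, hs, abs_of_pos hq, abs_of_nonneg (by linarith : (0:ℤ) ≤ b₁ + b₂)] at h
    linarith
  have hle : |x| ≤ 2 * k := by
    nlinarith [abs_nonneg x]
  have hge : k ≤ |x| := Int.le_of_dvd (abs_pos.mpr hx0) hkdvd
  obtain ⟨m, hm⟩ := hkdvd
  have hm12 : m = 1 ∨ m = 2 := by
    rcases lt_or_ge m 1 with h | h
    · nlinarith
    rcases lt_or_ge m 2 with h' | h'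
    · omega
    · right; nlinarith
  rcases hm12 with hm1 | hm2
  · rw [hm, hm1, mul_one]
  -- rule out |x| = 2k
  exfalso
  rw [hm, hm2] at h1
  have hbq : b₁ = q ∧ b₂ = q := by constructor <;> nlinarith
  have hx2s : x = 2 * s := by
    have : q * x = q * (2 * s) := by rw [← eb, hbq.1, hbq.2]; ring
    exact mul_left_cancel₀ (by omega) this
  have ha2p : a₁ + a₂ = 2 * p := by
    have : s * (a₁ + a₂) = s * (2 * p) := by rw [ea, hx2s]; ring
    exact mul_left_cancel₀ hs0 this
  have ht : q * (a₁ - p) = s := by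
    rw [← e1, hbq.1]; ring
  have ht0 : a₁ - p ≠ 0 := by
    intro h; rw [h, mul_zero] at ht; exact hs0 ht.symm
  have h1' := abs_le.mp ha₁
  have h2' := abs_le.mp ha₂
  rcases abs_cases p with ⟨hp1, hp2⟩ | ⟨hp1, hp2⟩ <;> omega

theorem stmt_12 (k p q : ℤ) (hk : 1 ≤ k)
    (hpq : IsCoprime p q) (hq : 0 < q)
    (a₁ b₁ a₂ b₂ : ℤ)
    (h₁ : IsCoprime a₁ b₁) (h₂ : IsCoprime a₂ b₂)
    (hd₁ : |a₁ * q - b₁ * p| = k) (hd₂ : |a₂ * q - b₂ * p| = k)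
    (ha₁ : |a₁| ≤ |p|) (ha₂ : |a₂| ≤ |p|)
    (hb₁ : 0 ≤ b₁ ∧ b₁ ≤ q) (hb₂ : 0 ≤ b₂ ∧ b₂ ≤ q)
    (hne : (a₁, b₁) ≠ (a₂, b₂) ∧ (a₁, b₁) ≠ (-a₂, -b₂)) :
    |a₁ * b₂ - b₁ * a₂| = k := by
  obtain ⟨hb₁0, hb₁q⟩ := hb₁
  obtain ⟨hb₂0, hb₂q⟩ := hb₂
  have hne1 : ¬(a₁ = a₂ ∧ b₁ = b₂) := by
    rintro ⟨h, h'⟩; exact hne.1 (by rw [h, h'])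
  have hne2 : ¬(a₁ = -a₂ ∧ b₁ = -b₂) := by
    rintro ⟨h, h'⟩; exact hne.2 (by rw [h, h'])
  have hk0 : (0:ℤ) ≤ k := by linarith
  rcases (abs_eq hk0).mp hd₁ with h1 | h1 <;> rcases (abs_eq hk0).mp hd₂ with h2 | h2
  · exact aux_same k p q k a₁ b₁ a₂ b₂ hk hpq hq (abs_of_nonneg hk0) h1 h2 hb₁0 hb₁q hb₂0 hb₂q hne1
  · exact aux_opp k p q k a₁ b₁ a₂ b₂ hk hpq hq (abs_of_nonneg hk0) h1 (by rw [h2]) ha₁ ha₂ hb₁0 hb₁q hb₂0 hb₂q hne2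
  · exact aux_opp k p q (-k) a₁ b₁ a₂ b₂ hk hpq hq (by rw [abs_neg, abs_of_nonneg hk0]) h1 (by rw [h2]; ring) ha₁ ha₂ hb₁0 hb₁q hb₂0 hb₂q hne2
  · exact aux_same k p q (-k) a₁ b₁ a₂ b₂ hk hpq hq (by rw [abs_neg, abs_of_nonneg hk0]) h1 h2 hb₁0 hb₁q hb₂0 hb₂q hne1
end

section
/- Let k be a positive integer that is not a prime power, p a prime dividing k with k = p^ℓ·c where gcd(p,c) = 1 and ℓ ≥ 1, and choose q with q ≡ c (mod p) and 0 < q < p^ℓ. Then for any integer n with q + p^ℓ·n > k, there is no coprime pair (a,b) with |a| ≤ q + p^ℓ·n, |b| ≤ q + p^ℓ·n, and |(q + p^ℓ·n)·b - p^ℓ·a| = k; i.e., the vertex (q + p^ℓ·n, p^ℓ) has no neighbor in F_k of level at most q + p^ℓ·n. -/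
theorem stmt_13 (k p c q n : ℤ) (ℓ : ℕ) (hℓ : 1 ≤ ℓ)
    (hp : Prime p) (hkpos : 0 < k)
    (hnpp : ¬ ∃ (p₀ : ℤ) (m : ℕ), Prime p₀ ∧ k = p₀ ^ m)
    (hk : k = p ^ ℓ * c) (hpc : ¬ p ∣ c)
    (hq : q ≡ c [ZMOD p]) (hq1 : 0 < q) (hq2 : q < p ^ ℓ)
    (hn : q + p ^ ℓ * n > k) :
    ¬ ∃ a b : ℤ, IsCoprime a b ∧
      |a| ≤ q + p ^ ℓ * n ∧ |b| ≤ q + p ^ ℓ * n ∧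
      |(q + p ^ ℓ * n) * b - p ^ ℓ * a| = k := by
  rintro ⟨a, b, hco, ha, hb, habs⟩
  set x : ℤ := q + p ^ ℓ * n with hx
  have hpl1 : (1:ℤ) < p ^ ℓ := lt_of_le_of_lt hq1 hq2
  have hplpos : (0:ℤ) < p ^ ℓ := by linarith
  have hc : 0 < c := by nlinarith
  have hxk : k < x := hn
  have hxpos : 0 < x := lt_trans hkpos hxk
  have hcx : c < x := by nlinarith
  -- p divides x - c
  have hppl : p ∣ p ^ ℓ := dvd_pow_self p (by omega)
  have hpqc : p ∣ (q - c) := Int.ModEq.dvd hq.symm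
  have hpxc : p ∣ (x - c) := by
    have : x - c = (q - c) + p ^ ℓ * n := by rw [hx]; ring
    rw [this]
    exact dvd_add hpqc (hppl.mul_right n)
  have hpx : ¬ p ∣ x := by
    intro h
    exact hpc (by have := dvd_sub h hpxc; simpa using this)
  -- p^ℓ divides b
  have hdvdk : (p:ℤ) ^ ℓ ∣ k := ⟨c, hk⟩
  have hdvd1 : (p:ℤ) ^ ℓ ∣ x * b - p ^ ℓ * a := by
    rw [← dvd_abs, habs]; exact hdvdk
  have hdvdxb : (p:ℤ) ^ ℓ ∣ x * b := by
    have : x * b = (x * b - p ^ ℓ * a) + p ^ ℓ * a := by ring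
    rw [this]; exact dvd_add hdvd1 (Dvd.intro a rfl)
  have hcop : IsCoprime ((p:ℤ) ^ ℓ) x :=
    IsCoprime.pow_left (hp.coprime_iff_not_dvd.mpr hpx)
  have hdvdb : (p:ℤ) ^ ℓ ∣ b := hcop.dvd_of_dvd_mul_left hdvdxb
  obtain ⟨b', hb'⟩ := hdvdb
  -- reduce the equation
  have heq : |x * b' - a| = c := by
    have h1 : |(p:ℤ) ^ ℓ * (x * b' - a)| = p ^ ℓ * c := by
      have : (p:ℤ) ^ ℓ * (x * b' - a) = x * b - p ^ ℓ * a := by rw [hb']; ring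
      rw [this, habs, hk]
    rw [abs_mul, abs_of_pos hplpos] at h1
    exact mul_left_cancel₀ (ne_of_gt hplpos) h1
  have habsa := abs_le.mp ha
  have habs' := abs_cases (x * b' - a)
  -- |b'| ≤ 1
  have hb'le : |b'| ≤ 1 := by
    by_contra h
    push_neg at h
    have h2 : (2:ℤ) ≤ |b'| := h
    have : 2 * x ≤ |x * b'| := by
      rw [abs_mul, abs_of_pos hxpos]
      nlinarith
    have h3 : |x * b'| ≤ |x * b' - a| + |a| := by
      have := abs_sub_abs_le_abs_sub (x * b') a
      linarith
    rw [heq] at h3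
    linarith
  -- p does not divide a
  have hpa : ¬ p ∣ a := by
    intro hdvda
    have hdvdbb : p ∣ b := hppl.trans ⟨b', hb'⟩
    exact hp.not_unit (hco.isUnit_of_dvd' hdvda hdvdbb)
  obtain ⟨hbl, hbu⟩ := abs_le.mp hb'le
  interval_cases b'
  · -- b' = -1 : a = c - x
    have haval : a = c - x := by
      rcases habs' with ⟨h1, _⟩ | ⟨h1, _⟩ <;> rw [heq] at h1 <;> linarith
    have : p ∣ c - x := by
      rw [show c - x = -(x - c) by ring]
      exact dvd_neg.mpr hpxc
    exact hpa (haval ▸ this)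
  · -- b' = 0 : b = 0, a unit, k = p^ℓ
    have hb0 : b = 0 := by rw [hb']; ring
    rw [hb0] at hco
    have hua : IsUnit a := isCoprime_zero_right.mp hco
    have haabs : |a| = 1 := by
      rcases Int.isUnit_iff.mp hua with h | h <;> simp [h]
    have hkpl : k = p ^ ℓ := by
      have h2 : |x * b - p ^ ℓ * a| = p ^ ℓ := by
        rw [hb0, mul_zero, zero_sub, abs_neg, abs_mul, haabs, mul_one,
          abs_of_pos hplpos]
      rw [← habs, h2]
    exact hnpp ⟨p, ℓ, hp, hkpl⟩
  · -- b' = 1 : a = x - c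
    have haval : a = x - c := by
      rcases habs' with ⟨h1, _⟩ | ⟨h1, _⟩ <;> rw [heq] at h1 <;> linarith
    exact hpa (haval ▸ hpxc)
end

section
/- Let k = p^ℓ be a prime power and let (a,b) be a coprime pair with b a unit mod k (i.e., gcd(b,p)=1), b > 1, and suppose (x₀,y₀) is a coprime pair with |a·y₀ - b·x₀| = k. Then there exists a coprime pair (x,y) with |a·y - b·x| = k and 0 < |y| < b. -/
/-!
Moving along the line `a·y - b·x = a·y₀ - b·x₀` replaces `(x₀, y₀)` by `(x₀ + m·a, y₀ + m·b)`.
Since `b ∤ k` (as `b > 1` is prime to `p`), `b ∤ y₀`, so some shift `y` lies strictly between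
`0` and `b`, and then `y - b` lies strictly between `-b` and `0`. These differ by `b`, which is
prime to `p`, so `p` fails to divide one of them; for that one, any common divisor of `x` and `y`
divides `k = p^ℓ` but is prime to `p`, hence is a unit.
-/

theorem isCoprime_of_mul_sub_mul_dvd {R : Type*} [CommRing R] {a b c x y : R}
    (hy : IsCoprime y c) (hc : a * y - b * x ∣ c) : IsCoprime x y := by
  have : IsCoprime y (-b * x + y * a) :=
    hy.of_isCoprime_of_dvd_right (by rwa [show -b * x + y * a = a * y - b * x by ring])
  exact (this.of_add_mul_left_right.of_mul_right_right).symm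

theorem Int.exists_add_mul_pos_lt {b y : ℤ} (hb : 0 < b) (hby : ¬ b ∣ y) :
    ∃ m : ℤ, 0 < y + m * b ∧ y + m * b < b := by
  refine ⟨-(y / b), ?_⟩
  have hmod : y + -(y / b) * b = y % b := by rw [Int.emod_def]; ring
  rw [hmod]
  exact ⟨(Int.emod_pos_of_not_dvd hby).resolve_left hb.ne', Int.emod_lt_of_pos y hb⟩

theorem Int.exists_add_mul_not_dvd {p b y : ℤ} (hb : 0 < b) (hby : ¬ b ∣ y) (hpb : ¬ p ∣ b) :
    ∃ m : ℤ, ¬ p ∣ y + m * b ∧ 0 < |y + m * b| ∧ |y + m * b| < b := by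
  obtain ⟨m, hpos, hlt⟩ := Int.exists_add_mul_pos_lt hb hby
  by_cases hp : p ∣ y + m * b
  · refine ⟨m - 1, fun hp' => hpb ?_, ?_⟩
    · simpa [sub_mul] using dvd_sub hp hp'
    · rw [abs_of_neg (by linarith)]
      constructor <;> linarith
  · exact ⟨m, hp, by rw [abs_of_pos hpos]; exact ⟨hpos, hlt⟩⟩

theorem stmt_15_general (p : ℤ) (ℓ : ℕ) (hp : Prime p)
    (k a b x₀ y₀ : ℤ) (hk : k = p ^ ℓ)
    (hbp : ¬ p ∣ b) (hb : 1 < b)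
    (h : |a * y₀ - b * x₀| = k) :
    ∃ x y : ℤ, IsCoprime x y ∧ |a * y - b * x| = k ∧ 0 < |y| ∧ |y| < b := by
  subst hk
  have hshift (m : ℤ) : a * (y₀ + m * b) - b * (x₀ + m * a) = a * y₀ - b * x₀ := by ring
  have hdvd : a * y₀ - b * x₀ ∣ p ^ ℓ := h ▸ self_dvd_abs _
  have hprime (n : ℤ) (hn : ¬ p ∣ n) : IsCoprime n (p ^ ℓ) :=
    ((hp.coprime_iff_not_dvd.mpr hn).symm).pow_right
  have hby : ¬ b ∣ y₀ := by
    intro hby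
    have hunit : IsUnit b := (hprime b hbp).isUnit_of_dvd' dvd_rfl
      ((dvd_sub (hby.mul_left a) (dvd_mul_right b x₀)).trans hdvd)
    rw [Int.isUnit_iff_abs_eq, abs_of_pos (by linarith)] at hunit
    linarith
  obtain ⟨m, hpm, hpos, hlt⟩ := Int.exists_add_mul_not_dvd (by linarith) hby hbp
  refine ⟨x₀ + m * a, y₀ + m * b, ?_, by rw [hshift, h], hpos, hlt⟩
  exact isCoprime_of_mul_sub_mul_dvd (hprime _ hpm) (hshift m ▸ hdvd)

theorem stmt_15 (p : ℤ) (ℓ : ℕ) (hp : Prime p) (hℓ : 1 ≤ ℓ)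
    (k a b x₀ y₀ : ℤ) (hk : k = p ^ ℓ)
    (hab : IsCoprime a b) (hbp : ¬ p ∣ b) (hb : 1 < b)
    (hxy : IsCoprime x₀ y₀) (h : |a * y₀ - b * x₀| = k) :
    ∃ x y : ℤ, IsCoprime x y ∧ |a * y - b * x| = k ∧ 0 < |y| ∧ |y| < b :=
  stmt_15_general p ℓ hp k a b x₀ y₀ hk hbp hb h
end

section
/- Fix k ≥ 1 and suppose v, w, v', w' are rational numbers (vertices of the Farey graph with positive denominators) with v = 0/1, w = k/q for some q ≥ 1, v' = x/y, w' = a/b, all lying in the fiber of φ_k over the line through (0,1) (so k divides x and k divides a), and satisfying v < v' < w < w'. Then it is impossible that both (0,1)~(k,q) and (x,y)~(a,b) are edges of F_k, i.e., |a·y - b·x| = k fails. Hence edges of F_k within a fiber of φ_k, drawn as geodesics in the hyperbolic plane, do not cross. -/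
theorem stmt_17 (k q x y a b : ℤ) (hk : 1 ≤ k) (hq : 1 ≤ q)
    (hkq : IsCoprime k q) (hxy : IsCoprime x y) (hab : IsCoprime a b)
    (hy : 0 < y) (hb : 0 < b)
    (hdx : k ∣ x) (hda : k ∣ a) (hx0 : x ≠ 0) (ha0 : a ≠ 0)
    (h1 : (0 : ℚ) < (x : ℚ) / (y : ℚ))
    (h2 : (x : ℚ) / (y : ℚ) < (k : ℚ) / (q : ℚ))
    (h3 : (k : ℚ) / (q : ℚ) < (a : ℚ) / (b : ℚ)) :
    |a * y - b * x| > k := by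
  have hyQ : (0:ℚ) < (y:ℚ) := by exact_mod_cast hy
  have hbQ : (0:ℚ) < (b:ℚ) := by exact_mod_cast hb
  have hqQ : (0:ℚ) < (q:ℚ) := by exact_mod_cast (hq.trans_lt' (by norm_num)).le.lt_of_ne' (by intro h; omega)
  have hx : 0 < x := by
    rcases div_pos_iff.mp h1 with ⟨h, _⟩ | ⟨_, h⟩
    · exact_mod_cast h
    · exact absurd h (by push_cast; linarith)
  have e2 : x * q < k * y := by
    have := (div_lt_div_iff₀ hyQ hqQ).mp h2
    exact_mod_cast this
  have e3 : k * b < a * q := by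
    have := (div_lt_div_iff₀ hqQ hbQ).mp h3
    exact_mod_cast this
  have e1 : x * b < a * y := by
    have := (div_lt_div_iff₀ hyQ hbQ).mp (h2.trans h3)
    exact_mod_cast this
  have hk0 : 0 < k := hk
  obtain ⟨x', rfl⟩ := hdx
  obtain ⟨a', rfl⟩ := hda
  have hx' : 1 ≤ x' := by nlinarith
  -- cancel k from the cross inequalities
  have f2 : x' * q < y := lt_of_mul_lt_mul_left (by nlinarith) hk0.le
  have f3 : b < a' * q := lt_of_mul_lt_mul_left (by nlinarith) hk0.le
  have f1 : x' * b < a' * y := lt_of_mul_lt_mul_left (by nlinarith) hk0.le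
  set M : ℤ := a' * y - x' * b with hM
  have hM1 : 1 ≤ M := by omega
  have hM2 : 2 ≤ M := by
    by_contra h
    have hMeq : M = 1 := by omega
    have key : q * M = b * (y - x' * q) + y * (a' * q - b) := by ring
    rw [hMeq] at key
    have g1 : 1 ≤ y - x' * q := by omega
    have g2 : 1 ≤ a' * q - b := by omega
    nlinarith [mul_le_mul_of_nonneg_left g1 hb.le, mul_le_mul_of_nonneg_left g2 hy.le,
      mul_le_mul_of_nonneg_right hx' (by omega : (0:ℤ) ≤ q)]
  have heq : k * a' * y - b * (k * x') = k * M := by ring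
  rw [heq, abs_of_pos (by nlinarith)]
  nlinarith
end
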